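/- arXiv:2605.22561 — 4 statements merged into one kernel-verified Lean document; each statement's English description precedes it below -/
import Mathlib

section
/- Let t be a positive integer, σ > 0, let K be a real symmetric t×t positive semidefinite matrix all of whose diagonal entries equal 1, and let k ∈ ℝ^t be such that the (t+1)×(t+1) block matrix [[1, kᵀ], [k, K]] is positive semidefinite. Then K + σ²I is invertible and 1 − kᵀ (K + σ²I)^{-1} k ≥ σ² / (t + σ²); equivalently, (1 − kᵀ(K + σ²I)^{-1}k)^{1/2} ≥ σ · (1/(t + σ²))^{1/2}. -/
open Matrix

lemma quad_aux (t : ℕ) (K : Matrix (Fin t) (Fin t) ℝ) (k : Fin t → ℝ)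
    (hblock : (Matrix.fromBlocks (1 : Matrix (Fin 1) (Fin 1) ℝ)
        (Matrix.of fun _ j => k j) (Matrix.of fun i _ => k i) K).PosSemidef)
    (c : ℝ) (v : Fin t → ℝ) :
    0 ≤ c ^ 2 + 2 * c * (k ⬝ᵥ v) + v ⬝ᵥ K *ᵥ v := by
  have h := hblock.dotProduct_mulVec_nonneg (Sum.elim (fun _ => c) v)
  rw [fromBlocks_mulVec] at h
  have hs : star (Sum.elim (fun (_ : Fin 1) => c) v) = Sum.elim (fun _ => c) v := rfl
  rw [hs, sumElim_dotProduct_sumElim] at h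
  simp only [one_mulVec, Function.comp, Sum.elim_inl, Sum.elim_inr, Pi.add_apply,
    mulVec, of_apply, dotProduct, Fin.sum_univ_one, mul_add, Finset.sum_add_distrib] at h
  have e : ∑ i, v i * (k i * c) = c * ∑ i, k i * v i := by
    rw [Finset.mul_sum]; exact Finset.sum_congr rfl (fun i _ => by ring)
  rw [e] at h
  simp only [dotProduct, mulVec]
  nlinarith [h]

/-- Global lower bound on the GP posterior variance (Lemma 9), in matrix form:
if `K` is symmetric PSD with unit diagonal and the block matrix `[[1, kᵀ], [k, K]]`
is PSD, then `K + σ²I` is invertible and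
`1 - kᵀ(K + σ²I)⁻¹k ≥ σ²/(t + σ²)`, equivalently
`√(1 - kᵀ(K + σ²I)⁻¹k) ≥ σ √(1/(t + σ²))`. -/
theorem stmt_3 (t : ℕ) (ht : 0 < t) (σ : ℝ) (hσ : 0 < σ)
    (K : Matrix (Fin t) (Fin t) ℝ) (k : Fin t → ℝ)
    (hK : K.PosSemidef) (hdiag : ∀ i, K i i = 1)
    (hblock : (Matrix.fromBlocks (1 : Matrix (Fin 1) (Fin 1) ℝ)
        (Matrix.of fun _ j => k j) (Matrix.of fun i _ => k i) K).PosSemidef) :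
    IsUnit (K + σ ^ 2 • (1 : Matrix (Fin t) (Fin t) ℝ)) ∧
      σ ^ 2 / (t + σ ^ 2)
        ≤ 1 - k ⬝ᵥ ((K + σ ^ 2 • (1 : Matrix (Fin t) (Fin t) ℝ))⁻¹ *ᵥ k) ∧
      σ * Real.sqrt (1 / (t + σ ^ 2))
        ≤ Real.sqrt (1 - k ⬝ᵥ ((K + σ ^ 2 • (1 : Matrix (Fin t) (Fin t) ℝ))⁻¹ *ᵥ k)) := by
  set A := K + σ ^ 2 • (1 : Matrix (Fin t) (Fin t) ℝ) with hA
  -- A is positive definite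
  have hsm : (σ ^ 2 • (1 : Matrix (Fin t) (Fin t) ℝ)).PosDef := by
    rw [smul_one_eq_diagonal]
    exact Matrix.posDef_diagonal_iff.mpr fun i => by positivity
  have hApd : A.PosDef := Matrix.PosDef.posSemidef_add hK hsm
  have hAunit : IsUnit A := hApd.isUnit
  refine ⟨hAunit, ?_⟩
  set v : Fin t → ℝ := A⁻¹ *ᵥ k with hv
  have hAv : A *ᵥ v = k := by
    rw [hv, mulVec_mulVec, Matrix.mul_nonsing_inv _ hApd.det_pos.ne'.isUnit, one_mulVec]
  set s : ℝ := k ⬝ᵥ v with hsdef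
  -- s ≥ 0
  have hs0 : 0 ≤ s := by
    have := hApd.inv.posSemidef.re_dotProduct_nonneg k
    simpa [hsdef, hv, dotProduct_comm] using this
  -- v ⬝ K v = s - σ² ‖v‖²
  have hvKv : v ⬝ᵥ K *ᵥ v = s - σ ^ 2 * (v ⬝ᵥ v) := by
    have : v ⬝ᵥ A *ᵥ v = v ⬝ᵥ K *ᵥ v + σ ^ 2 * (v ⬝ᵥ v) := by
      rw [hA, add_mulVec, dotProduct_add, smul_mulVec, one_mulVec, dotProduct_smul,
        smul_eq_mul]
    have h2 : v ⬝ᵥ A *ᵥ v = s := by rw [hAv, dotProduct_comm, hsdef]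
    linarith [this, h2]
  -- quadratic bound: s² ≤ v⬝Kv
  have hq : s ^ 2 ≤ v ⬝ᵥ K *ᵥ v := by
    have := quad_aux t K k hblock (-s) v
    rw [← hsdef] at this
    nlinarith [this]
  -- each |kᵢ| ≤ 1 hence k⬝k ≤ t
  have hkk : k ⬝ᵥ k ≤ (t : ℝ) := by
    have hki : ∀ i, k i ^ 2 ≤ 1 := by
      intro i
      have := quad_aux t K k hblock (-(k i)) (Pi.single i 1)
      simp only [dotProduct_single, mul_one, single_dotProduct, one_mul, mulVec_single_one, col_apply,
        hdiag i] at this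
      nlinarith [this]
    calc k ⬝ᵥ k = ∑ i, k i ^ 2 := by simp [dotProduct, sq]
      _ ≤ ∑ _i : Fin t, (1 : ℝ) := Finset.sum_le_sum fun i _ => hki i
      _ = (t : ℝ) := by simp
  -- Cauchy-Schwarz: s² ≤ (k⬝k)(v⬝v)
  have hcs : s ^ 2 ≤ (k ⬝ᵥ k) * (v ⬝ᵥ v) := by
    have := Finset.sum_mul_sq_le_sq_mul_sq Finset.univ k v
    simpa [hsdef, dotProduct, sq] using this
  have hvv : 0 ≤ v ⬝ᵥ v := Finset.sum_nonneg fun i _ => mul_self_nonneg _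
  -- combine: s²(t+σ²) ≤ t s
  have hkey : s ^ 2 * ((t : ℝ) + σ ^ 2) ≤ (t : ℝ) * s := by
    have ht' : (1 : ℝ) ≤ (t : ℝ) := by exact_mod_cast ht
    have h1 : s ^ 2 ≤ s - σ ^ 2 * (v ⬝ᵥ v) := hvKv ▸ hq
    have h2 : s ^ 2 ≤ (t : ℝ) * (v ⬝ᵥ v) :=
      hcs.trans (mul_le_mul_of_nonneg_right hkk hvv)
    nlinarith [h1, h2, sq_nonneg σ]
  have htσ : (0 : ℝ) < (t : ℝ) + σ ^ 2 := by positivity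
  have ht' : (1 : ℝ) ≤ (t : ℝ) := by exact_mod_cast ht
  have hmain : σ ^ 2 / ((t : ℝ) + σ ^ 2) ≤ 1 - s := by
    rw [div_le_iff₀ htσ]
    nlinarith [hkey, hs0, sq_nonneg (s * ((t : ℝ) + σ ^ 2) - t), mul_nonneg hs0 htσ.le]
  refine ⟨hmain, ?_⟩
  calc σ * Real.sqrt (1 / ((t : ℝ) + σ ^ 2))
      = Real.sqrt (σ ^ 2) * Real.sqrt (1 / ((t : ℝ) + σ ^ 2)) := by
        rw [Real.sqrt_sq hσ.le]
    _ = Real.sqrt (σ ^ 2 * (1 / ((t : ℝ) + σ ^ 2))) := (Real.sqrt_mul (sq_nonneg σ) _).symm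
    _ = Real.sqrt (σ ^ 2 / ((t : ℝ) + σ ^ 2)) := by rw [mul_one_div]
    _ ≤ Real.sqrt (1 - s) := Real.sqrt_le_sqrt hmain
end

section
/- Let Φ denote the cumulative distribution function and φ the probability density function of the standard normal distribution. Then: (a) for every c ≥ 0, 1 − Φ(c) ≤ (1/2) e^{−c²/2}; and (b) the function c ↦ (1 − Φ(c)) / ((1/2) e^{−c²/2}) is strictly decreasing on [0, ∞). -/
open MeasureTheory Set Real

/-- The cumulative distribution function `Φ` of the standard normal distribution. -/
noncomputable def stdNormalCDF (x : ℝ) : ℝ :=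
  ∫ t in Set.Iic x, Real.exp (-t ^ 2 / 2) / Real.sqrt (2 * Real.pi)

noncomputable def gphi (t : ℝ) : ℝ := Real.exp (-t ^ 2 / 2) / Real.sqrt (2 * Real.pi)

lemma gphi_eq : gphi = fun t => Real.exp (-(1/2 : ℝ) * t ^ 2) / Real.sqrt (2 * Real.pi) := by
  funext t; simp only [gphi]; ring_nf

lemma gphi_integrable : Integrable gphi := by
  rw [gphi_eq]
  exact (integrable_exp_neg_mul_sq (by norm_num)).div_const _

lemma gphi_total : ∫ t : ℝ, gphi t = 1 := by
  rw [gphi_eq, integral_div, integral_gaussian,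
    show Real.pi / (1/2) = 2 * Real.pi by ring]
  exact div_self (by positivity)

lemma tail_eq (c : ℝ) : 1 - stdNormalCDF c = ∫ t in Ioi c, gphi t := by
  have h := intervalIntegral.integral_Iic_add_Ioi (b := c) (μ := volume) (f := gphi)
    gphi_integrable.integrableOn gphi_integrable.integrableOn
  rw [gphi_total] at h
  have h0 : stdNormalCDF c = ∫ t in Iic c, gphi t := rfl
  rw [h0]; linarith

lemma tail_shift (c : ℝ) : (∫ t in Ioi c, gphi t) = ∫ s in Ioi (0:ℝ), gphi (s + c) := by
  have h := (measurePreserving_add_right (volume : Measure ℝ) c).setIntegral_preimage_emb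
    (measurableEmbedding_addRight c) gphi (Ioi c)
  have hpre : (fun x => x + c) ⁻¹' Ioi c = Ioi (0:ℝ) := by ext x; simp
  rw [← h, hpre]

noncomputable def Fint (c : ℝ) : ℝ :=
  ∫ s in Ioi (0:ℝ), Real.exp (-(c * s)) * Real.exp (-s ^ 2 / 2)

lemma tail_repr (c : ℝ) :
    1 - stdNormalCDF c = Real.exp (-c ^ 2 / 2) / Real.sqrt (2 * Real.pi) * Fint c := by
  rw [tail_eq, tail_shift, Fint, ← integral_const_mul]
  congr 1
  funext s
  simp only [gphi]
  rw [div_mul_eq_mul_div, mul_comm, ← mul_assoc, ← Real.exp_add, ← Real.exp_add]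
  ring_nf

lemma Fint_integrable {c : ℝ} (hc : 0 ≤ c) :
    IntegrableOn (fun s => Real.exp (-(c * s)) * Real.exp (-s ^ 2 / 2)) (Ioi (0:ℝ)) := by
  have hg : IntegrableOn (fun s : ℝ => Real.exp (-(1/2 : ℝ) * s ^ 2)) (Ioi (0:ℝ)) :=
    (integrable_exp_neg_mul_sq (by norm_num)).integrableOn
  refine hg.mono' (Continuous.aestronglyMeasurable (by continuity)) ?_
  filter_upwards [ae_restrict_mem measurableSet_Ioi] with s hs
  have hs' : (0:ℝ) < s := hs
  rw [norm_mul, Real.norm_eq_abs, Real.norm_eq_abs, abs_of_pos (Real.exp_pos _),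
    abs_of_pos (Real.exp_pos _)]
  have h1 : Real.exp (-(c * s)) ≤ 1 := by
    rw [Real.exp_le_one_iff]; nlinarith
  have h2 : Real.exp (-s ^ 2 / 2) = Real.exp (-(1/2 : ℝ) * s ^ 2) := by ring_nf
  rw [h2]
  nlinarith [Real.exp_pos (-(1/2 : ℝ) * s ^ 2)]

lemma Fint_strictAnti : StrictAntiOn Fint (Set.Ici (0:ℝ)) := by
  intro a ha b hb hab
  have ha' : (0:ℝ) ≤ a := ha
  have hb' : (0:ℝ) ≤ b := hb
  have hdiff : 0 < ∫ s in Ioi (0:ℝ),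
      (Real.exp (-(a * s)) * Real.exp (-s ^ 2 / 2) -
        Real.exp (-(b * s)) * Real.exp (-s ^ 2 / 2)) := by
    rw [setIntegral_pos_iff_support_of_nonneg_ae]
    · have hsub : Ioi (0:ℝ) ⊆ (Function.support fun s =>
          Real.exp (-(a * s)) * Real.exp (-s ^ 2 / 2) -
            Real.exp (-(b * s)) * Real.exp (-s ^ 2 / 2)) := by
        intro s hs
        have hs' : (0:ℝ) < s := hs
        have h1 : Real.exp (-(b * s)) < Real.exp (-(a * s)) := by
          apply Real.exp_lt_exp.mpr; nlinarith
        have h2 := Real.exp_pos (-s ^ 2 / 2)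
        exact (sub_pos.mpr (by nlinarith)).ne'
      calc (0 : ENNReal) < volume (Ioi (0:ℝ)) := by
              rw [Real.volume_Ioi]; exact ENNReal.zero_lt_top
        _ ≤ _ := measure_mono (subset_inter hsub Subset.rfl)
    · filter_upwards [ae_restrict_mem measurableSet_Ioi] with s hs
      have hs' : (0:ℝ) < s := hs
      have h1 : Real.exp (-(b * s)) ≤ Real.exp (-(a * s)) := by
        apply Real.exp_le_exp.mpr; nlinarith
      have h2 := Real.exp_pos (-s ^ 2 / 2)
      simp only [Pi.zero_apply]
      nlinarith
    · exact (Fint_integrable ha').sub (Fint_integrable hb')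
  rw [integral_sub (Fint_integrable ha') (Fint_integrable hb')] at hdiff
  simp only [Fint]
  linarith

lemma std_half : stdNormalCDF 0 = 1/2 := by
  have h := integral_comp_neg_Ioi (0:ℝ) gphi
  simp only [neg_zero] at h
  have hfun : (fun x : ℝ => gphi (-x)) = gphi := by
    funext x; simp [gphi, neg_sq]
  rw [hfun] at h
  have htail := tail_eq 0
  have h0 : stdNormalCDF 0 = ∫ t in Iic (0:ℝ), gphi t := rfl
  rw [h0, ← h]; rw [h0, ← h] at htail; linarith

lemma Fhalf : Fint 0 / Real.sqrt (2 * Real.pi) = 1 / 2 := by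
  have h := tail_repr 0
  rw [std_half, show -(0:ℝ)^2/2 = 0 by norm_num, Real.exp_zero] at h
  have hs : (0:ℝ) < Real.sqrt (2 * Real.pi) := by positivity
  rw [div_eq_iff hs.ne']
  field_simp at h
  have hsplit : Real.sqrt (2 * Real.pi) = Real.sqrt 2 * Real.sqrt Real.pi :=
    Real.sqrt_mul (by norm_num) _
  linarith

lemma ratio_eq (c : ℝ) :
    (1 - stdNormalCDF c) / ((1 / 2) * Real.exp (-c ^ 2 / 2))
      = 2 * (Fint c / Real.sqrt (2 * Real.pi)) := by
  rw [tail_repr c]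
  have he : Real.exp (-c ^ 2 / 2) ≠ 0 := (Real.exp_pos _).ne'
  have hs : Real.sqrt (2 * Real.pi) ≠ 0 := by positivity
  field_simp

/-- (a) Gaussian tail bound `1 - Φ(c) ≤ (1/2)e^{-c²/2}` for `c ≥ 0`, and
(b) the ratio `(1 - Φ(c)) / ((1/2)e^{-c²/2})` is strictly decreasing on `[0, ∞)`. -/
theorem stmt_4 :
    (∀ c : ℝ, 0 ≤ c → 1 - stdNormalCDF c ≤ (1 / 2) * Real.exp (-c ^ 2 / 2)) ∧
      StrictAntiOn (fun c : ℝ => (1 - stdNormalCDF c) / ((1 / 2) * Real.exp (-c ^ 2 / 2)))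
        (Set.Ici (0 : ℝ)) := by
  have hsq : (0:ℝ) < Real.sqrt (2 * Real.pi) := by positivity
  constructor
  · intro c hc
    have hFle : Fint c ≤ Fint 0 := by
      rcases eq_or_lt_of_le hc with h | h
      · rw [← h]
      · exact (Fint_strictAnti (le_refl (0:ℝ)) hc h).le
    calc 1 - stdNormalCDF c
        = Real.exp (-c ^ 2 / 2) * (Fint c / Real.sqrt (2 * Real.pi)) := by
          rw [tail_repr c]; ring
      _ ≤ Real.exp (-c ^ 2 / 2) * (Fint 0 / Real.sqrt (2 * Real.pi)) := by
          apply mul_le_mul_of_nonneg_left _ (Real.exp_pos _).le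
          exact div_le_div_of_nonneg_right hFle hsq.le
      _ = 1 / 2 * Real.exp (-c ^ 2 / 2) := by rw [Fhalf]; ring
  · intro a ha b hb hab
    simp only [ratio_eq]
    have hF : Fint b < Fint a := Fint_strictAnti ha hb hab
    have h2 : Fint b / Real.sqrt (2 * Real.pi) < Fint a / Real.sqrt (2 * Real.pi) :=
      div_lt_div_of_pos_right hF hsq
    linarith
end

section
/- Let β, η, α ≥ 0 with α^{1/2} ≤ β^{1/2}, let ρ ≥ 0 and s₀ ≥ 0, and let f*, f̂, f_t, μ₁, μ₂ be real numbers and σ₁ ≥ 0, σ₂ ≥ s₀. Suppose: (i) f_t − μ₁ ≥ −η^{1/2} σ₁; (ii) f̂ − μ₂ ≤ α^{1/2} σ₂; (iii) f* − f̂ ≤ ρ; (iv) μ₂ + β^{1/2} σ₂ ≤ μ₁ + β^{1/2} σ₁. Then f* − f_t ≤ (β^{1/2} + η^{1/2}) σ₁ − (β^{1/2} − α^{1/2}) s₀ + ρ. -/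
/-- Deterministic core of the tightened instantaneous regret bound for GP-UCB
(Lemma 3): from the one-sided confidence intervals, the discretization error bound,
the UCB maximality of the query point, and the lower bound `s₀` on `σ₂`, one gets
`f* - f_t ≤ (√β + √η)σ₁ - (√β - √α)s₀ + ρ`. -/
theorem stmt_7 (β η α ρ s₀ fstar fhat ft μ₁ μ₂ σ₁ σ₂ : ℝ)
    (hβ : 0 ≤ β) (hη : 0 ≤ η) (hα : 0 ≤ α)
    (hαβ : Real.sqrt α ≤ Real.sqrt β) (hρ : 0 ≤ ρ) (hs₀ : 0 ≤ s₀)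
    (hσ₁ : 0 ≤ σ₁) (hσ₂ : s₀ ≤ σ₂)
    (h1 : ft - μ₁ ≥ -(Real.sqrt η * σ₁))
    (h2 : fhat - μ₂ ≤ Real.sqrt α * σ₂)
    (h3 : fstar - fhat ≤ ρ)
    (h4 : μ₂ + Real.sqrt β * σ₂ ≤ μ₁ + Real.sqrt β * σ₁) :
    fstar - ft ≤ (Real.sqrt β + Real.sqrt η) * σ₁ - (Real.sqrt β - Real.sqrt α) * s₀ + ρ := by
  nlinarith [mul_nonneg (sub_nonneg.2 hαβ) (sub_nonneg.2 hσ₂)]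
end

section
/- Let t be a positive integer, σ > 0, and let K be a real symmetric t×t positive semidefinite matrix with K_{ii} ≤ 1 for all i. For i = 1, …, t define σ_{i−1}² := K_{ii} − k_iᵀ (K^{(i−1)} + σ² I)^{-1} k_i, where K^{(i−1)} is the leading (i−1)×(i−1) principal submatrix of K and k_i = (K_{1i}, …, K_{(i−1)i})ᵀ (so that σ₀² = K_{11}). Then ∑_{i=1}^t σ_{i−1}² ≤ (2 / log(1 + σ^{−2})) · (1/2) log det(I + σ^{−2} K). -/
open Matrix

open Matrix

namespace Stmt12Aux

noncomputable section
variable {n : ℕ} (σ : ℝ) (S : Matrix (Fin (n + 1)) (Fin (n + 1)) ℝ)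

/-- top-left block -/
def Ablk : Matrix (Fin n) (Fin n) ℝ := Matrix.of fun a b => S a.castSucc b.castSucc
/-- last column (without corner) -/
def kvec : Fin n → ℝ := fun a => S a.castSucc (Fin.last n)

def e : Fin n ⊕ Fin 1 ≃ Fin (n + 1) := finSumFinEquiv

lemma submatrix_e (hS : S.IsHermitian) :
    S.submatrix (e (n := n)) (e (n := n)) =
      fromBlocks (Ablk S) (Matrix.of fun a (_ : Fin 1) => kvec S a)
        (Matrix.of fun a (_ : Fin 1) => kvec S a)ᴴ
        (Matrix.of fun (_ : Fin 1) (_ : Fin 1) => S (Fin.last n) (Fin.last n)) := by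
  ext x y
  have hsymm : ∀ i j, S i j = S j i := fun i j => by
    conv_lhs => rw [← hS]
    rfl
  cases x with
  | inl a =>
    cases y with
    | inl b => rfl
    | inr b =>
      simp only [e, fromBlocks, submatrix_apply, Sum.elim_inl, Sum.elim_inr]
      have : finSumFinEquiv (Sum.inr b : Fin n ⊕ Fin 1) = Fin.last n := by
        simp [finSumFinEquiv, Fin.ext_iff, Fin.last, Subsingleton.elim b 0]
      rw [this]; rfl
  | inr a =>
    cases y with
    | inl b =>
      simp only [e, fromBlocks, submatrix_apply, Sum.elim_inl, Sum.elim_inr]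
      have : finSumFinEquiv (Sum.inr a : Fin n ⊕ Fin 1) = Fin.last n := by
        simp [finSumFinEquiv, Fin.ext_iff, Fin.last, Subsingleton.elim a 0]
      rw [this]
      simp only [conjTranspose_apply, Matrix.of_apply, star_trivial]
      exact hsymm _ _
    | inr b =>
      simp only [e, fromBlocks, submatrix_apply, Sum.elim_inr]
      have h1 : finSumFinEquiv (Sum.inr a : Fin n ⊕ Fin 1) = Fin.last n := by
        simp [finSumFinEquiv, Fin.ext_iff, Fin.last, Subsingleton.elim a 0]
      have h2 : finSumFinEquiv (Sum.inr b : Fin n ⊕ Fin 1) = Fin.last n := by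
        simp [finSumFinEquiv, Fin.ext_iff, Fin.last, Subsingleton.elim b 0]
      rw [h1, h2]; rfl

end
end Stmt12Aux

namespace Stmt12Aux
open Matrix
lemma entry_eq {n : ℕ} (M : Matrix (Fin n) (Fin n) ℝ) (k : Fin n → ℝ) :
    ((Matrix.of fun a (_ : Fin 1) => k a)ᴴ * M * (Matrix.of fun a (_ : Fin 1) => k a)) 0 0
      = k ⬝ᵥ (M *ᵥ k) := by
  simp only [Matrix.mul_apply, dotProduct, mulVec, conjTranspose_apply, Matrix.of_apply,
    star_trivial, Finset.sum_mul, Finset.mul_sum]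
  rw [Finset.sum_comm]
  exact Finset.sum_congr rfl fun a _ => Finset.sum_congr rfl fun b _ => by ring
end Stmt12Aux

namespace Stmt12Aux
open Matrix
noncomputable section
variable {n : ℕ} {σ : ℝ} {S : Matrix (Fin (n + 1)) (Fin (n + 1)) ℝ}

lemma posdef_A' (hσ : 0 < σ) (hS : S.PosSemidef) :
    (Ablk S + σ ^ 2 • (1 : Matrix (Fin n) (Fin n) ℝ)).PosDef := by
  have hA : (Ablk S).PosSemidef := hS.submatrix Fin.castSucc
  refine Matrix.PosDef.posSemidef_add hA ?_
  rw [smul_one_eq_diagonal]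
  exact Matrix.PosDef.diagonal fun _ => by positivity

lemma corner_psd (hσ : 0 < σ) :
    (fromBlocks (σ ^ 2 • (1 : Matrix (Fin n) (Fin n) ℝ)) 0 0
      (0 : Matrix (Fin 1) (Fin 1) ℝ)).PosSemidef := by
  have : fromBlocks (σ ^ 2 • (1 : Matrix (Fin n) (Fin n) ℝ)) 0 0
      (0 : Matrix (Fin 1) (Fin 1) ℝ)
      = diagonal (Sum.elim (fun _ : Fin n => σ ^ 2) (fun _ : Fin 1 => 0)) := by
    ext (x | x) (y | y) <;>
      simp [fromBlocks, diagonal, Matrix.one_apply, Fin.ext_iff, eq_comm]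
  rw [this]
  exact PosSemidef.diagonal fun x => by cases x <;> simp <;> positivity

lemma nonneg_s (hσ : 0 < σ) (hS : S.PosSemidef) :
    0 ≤ S (Fin.last n) (Fin.last n) -
      kvec S ⬝ᵥ ((Ablk S + σ ^ 2 • 1)⁻¹ *ᵥ kvec S) := by
  set A' := Ablk S + σ ^ 2 • (1 : Matrix (Fin n) (Fin n) ℝ) with hA'def
  have hA' : A'.PosDef := posdef_A' hσ hS
  haveI : Invertible A' :=
    Matrix.invertibleOfIsUnitDet _ (isUnit_iff_ne_zero.mpr hA'.det_pos.ne')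
  set B := (Matrix.of fun a (_ : Fin 1) => kvec S a) with hBdef
  set D := (Matrix.of fun (_ : Fin 1) (_ : Fin 1) => S (Fin.last n) (Fin.last n)) with hDdef
  have hF : (fromBlocks A' B Bᴴ D).PosSemidef := by
    have h1 : S.submatrix (e (n := n)) (e (n := n)) = fromBlocks (Ablk S) B Bᴴ D :=
      submatrix_e S hS.1
    have h2 : fromBlocks A' B Bᴴ D
        = S.submatrix (e (n := n)) (e (n := n)) +
          fromBlocks (σ ^ 2 • (1 : Matrix (Fin n) (Fin n) ℝ)) 0 0 0 := by
      rw [h1, fromBlocks_add]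
      simp
      rfl
    rw [h2]
    exact (hS.submatrix _).add (corner_psd hσ)
  have hschur := (PosDef.fromBlocks₁₁ B D hA').mp hF
  have h00 : 0 ≤ (D - Bᴴ * A'⁻¹ * B) 0 0 := by
    have := hschur.dotProduct_mulVec_nonneg (fun _ => 1)
    simpa [dotProduct, mulVec] using this
  have : (D - Bᴴ * A'⁻¹ * B) 0 0
      = S (Fin.last n) (Fin.last n) - kvec S ⬝ᵥ (A'⁻¹ *ᵥ kvec S) := by
    simp only [Matrix.sub_apply, hDdef, Matrix.of_apply, hBdef]
    rw [entry_eq]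
  linarith [this ▸ h00]

lemma det_step (hσ : 0 < σ) (hS : S.PosSemidef) :
    (S + σ ^ 2 • 1).det =
      (Ablk S + σ ^ 2 • 1).det *
        (σ ^ 2 + (S (Fin.last n) (Fin.last n) -
          kvec S ⬝ᵥ ((Ablk S + σ ^ 2 • 1)⁻¹ *ᵥ kvec S))) := by
  set A' := Ablk S + σ ^ 2 • (1 : Matrix (Fin n) (Fin n) ℝ) with hA'def
  have hA' : A'.PosDef := posdef_A' hσ hS
  haveI : Invertible A' :=
    Matrix.invertibleOfIsUnitDet _ (isUnit_iff_ne_zero.mpr hA'.det_pos.ne')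
  set B := (Matrix.of fun a (_ : Fin 1) => kvec S a) with hBdef
  set D := (Matrix.of fun (_ : Fin 1) (_ : Fin 1) => S (Fin.last n) (Fin.last n)) with hDdef
  have key : ((S + σ ^ 2 • 1).submatrix (e (n := n)) (e (n := n)))
      = fromBlocks A' B Bᴴ (D + σ ^ 2 • 1) := by
    have h0 : (S + σ ^ 2 • 1).submatrix (e (n := n)) (e (n := n))
        = S.submatrix (e (n := n)) (e (n := n)) +
          σ ^ 2 • (1 : Matrix (Fin n ⊕ Fin 1) (Fin n ⊕ Fin 1) ℝ) := by
      ext x y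
      simp [Matrix.one_apply, Equiv.apply_eq_iff_eq]
    rw [h0, submatrix_e S hS.1, ← fromBlocks_one, fromBlocks_smul, fromBlocks_add]
    simp
    exact ⟨rfl, rfl, rfl⟩
  have := det_submatrix_equiv_self (e (n := n)) (S + σ ^ 2 • 1)
  rw [← this, key, det_fromBlocks₁₁, invOf_eq_nonsing_inv]
  congr 1
  rw [det_fin_one]
  simp only [Matrix.sub_apply, Matrix.add_apply, hDdef, Matrix.of_apply, Matrix.smul_apply,
    Matrix.one_apply_eq, smul_eq_mul, mul_one]
  rw [entry_eq]
  ring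

end
end Stmt12Aux

namespace Stmt12Aux

lemma scalar_ineq (α s : ℝ) (hα : 0 < α) (h0 : 0 ≤ s) (h1 : s ≤ 1) :
    s * Real.log (1 + α) ≤ Real.log (1 + α * s) := by
  have hc := strictConcaveOn_log_Ioi.concaveOn.2 (Set.mem_Ioi.mpr one_pos)
    (Set.mem_Ioi.mpr (by linarith : (0:ℝ) < 1 + α)) (by linarith : (0:ℝ) ≤ 1 - s) h0
    (by ring : (1 - s) + s = 1)
  have harg : (1 - s) • (1 : ℝ) + s • (1 + α) = 1 + α * s := by
    simp only [smul_eq_mul]; ring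
  rw [harg] at hc
  simpa [smul_eq_mul] using hc

noncomputable def subK (t : ℕ) (K : Matrix (Fin t) (Fin t) ℝ) (n : ℕ) (h : n ≤ t) :
    Matrix (Fin n) (Fin n) ℝ :=
  Matrix.of fun a b => K ⟨a.1, lt_of_lt_of_le a.2 h⟩ ⟨b.1, lt_of_lt_of_le b.2 h⟩

noncomputable def sval (t : ℕ) (K : Matrix (Fin t) (Fin t) ℝ) (σ : ℝ) (i : ℕ) (h : i < t) : ℝ :=
  K ⟨i, h⟩ ⟨i, h⟩ -
    (fun a : Fin i => K ⟨a.1, a.2.trans h⟩ ⟨i, h⟩) ⬝ᵥ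
      ((subK t K i h.le + σ ^ 2 • 1)⁻¹ *ᵥ fun a : Fin i => K ⟨a.1, a.2.trans h⟩ ⟨i, h⟩)

lemma subK_psd {t : ℕ} {K : Matrix (Fin t) (Fin t) ℝ} (hK : K.PosSemidef) (n : ℕ) (h : n ≤ t) :
    (subK t K n h).PosSemidef :=
  hK.submatrix fun a : Fin n => (⟨a.1, lt_of_lt_of_le a.2 h⟩ : Fin t)

lemma det_prod (t : ℕ) (K : Matrix (Fin t) (Fin t) ℝ) (σ : ℝ) (hσ : 0 < σ)
    (hK : K.PosSemidef) :
    ∀ n (h : n ≤ t), (subK t K n h + σ ^ 2 • 1).det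
      = ∏ i : Fin n, (σ ^ 2 + sval t K σ i.1 (lt_of_lt_of_le i.2 h)) := by
  intro n
  induction n with
  | zero => intro h; simp [Matrix.det_isEmpty]
  | succ n ih =>
    intro h
    have hn : n ≤ t := (Nat.le_succ n).trans h
    have hSpsd : (subK t K (n + 1) h).PosSemidef := subK_psd hK (n + 1) h
    have hd := det_step (S := subK t K (n + 1) h) hσ hSpsd
    have e1 : Ablk (subK t K (n + 1) h) + σ ^ 2 • 1
        = subK t K n hn + σ ^ 2 • (1 : Matrix (Fin n) (Fin n) ℝ) := rfl
    have e2 : σ ^ 2 + (subK t K (n + 1) h (Fin.last n) (Fin.last n) -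
          kvec (subK t K (n + 1) h) ⬝ᵥ
            ((Ablk (subK t K (n + 1) h) + σ ^ 2 • 1)⁻¹ *ᵥ kvec (subK t K (n + 1) h)))
        = σ ^ 2 + sval t K σ n (lt_of_lt_of_le (Nat.lt_succ_self n) h) := rfl
    rw [Fin.prod_univ_castSucc, hd, e2, e1, ih hn]
    rfl

lemma sval_nonneg {t : ℕ} {K : Matrix (Fin t) (Fin t) ℝ} {σ : ℝ} (hσ : 0 < σ)
    (hK : K.PosSemidef) (i : ℕ) (h : i < t) : 0 ≤ sval t K σ i h := by
  have hS : (subK t K (i + 1) h).PosSemidef := subK_psd hK (i + 1) h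
  exact nonneg_s (S := subK t K (i + 1) h) hσ hS

lemma sval_le_one {t : ℕ} {K : Matrix (Fin t) (Fin t) ℝ} {σ : ℝ} (hσ : 0 < σ)
    (hK : K.PosSemidef) (hdiag : ∀ j, K j j ≤ 1) (i : ℕ) (h : i < t) :
    sval t K σ i h ≤ 1 := by
  have hA' : (subK t K i h.le + σ ^ 2 • (1 : Matrix (Fin i) (Fin i) ℝ)).PosDef := by
    refine Matrix.PosDef.posSemidef_add (subK_psd hK i h.le) ?_
    rw [smul_one_eq_diagonal]
    exact Matrix.PosDef.diagonal fun _ => by positivity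
  have hq : 0 ≤ (fun a : Fin i => K ⟨a.1, a.2.trans h⟩ ⟨i, h⟩) ⬝ᵥ
      ((subK t K i h.le + σ ^ 2 • 1)⁻¹ *ᵥ fun a : Fin i => K ⟨a.1, a.2.trans h⟩ ⟨i, h⟩) := by
    have := hA'.inv.posSemidef.dotProduct_mulVec_nonneg (fun a : Fin i => K ⟨a.1, a.2.trans h⟩ ⟨i, h⟩)
    simpa using this
  have := hdiag ⟨i, h⟩
  unfold sval
  linarith

end Stmt12Aux

open Stmt12Aux

/-- Sum of GP posterior variances bounded by the information gain (Lemma 5, matrix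
form): with `σ_{i-1}² = K_{ii} - k_iᵀ(K^{(i-1)} + σ²I)⁻¹k_i` built from the leading
principal submatrices of a PSD matrix `K` with diagonal entries at most `1`,
`∑ σ_{i-1}² ≤ (2/log(1 + σ⁻²)) · (1/2) log det(I + σ⁻²K)`. -/
theorem stmt_12 (t : ℕ) (ht : 0 < t) (σ : ℝ) (hσ : 0 < σ)
    (K : Matrix (Fin t) (Fin t) ℝ) (hK : K.PosSemidef) (hdiag : ∀ i, K i i ≤ 1) :
    ∑ i : Fin t,
        (K i i -
          (fun a : Fin i.val => K ⟨a.val, a.isLt.trans i.isLt⟩ i) ⬝ᵥ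
            (((Matrix.of fun a b : Fin i.val =>
                  K ⟨a.val, a.isLt.trans i.isLt⟩ ⟨b.val, b.isLt.trans i.isLt⟩) +
                σ ^ 2 • (1 : Matrix (Fin i.val) (Fin i.val) ℝ))⁻¹ *ᵥ
              fun a : Fin i.val => K ⟨a.val, a.isLt.trans i.isLt⟩ i))
      ≤ (2 / Real.log (1 + (σ ^ 2)⁻¹)) *
          ((1 / 2) * Real.log ((1 + (σ ^ 2)⁻¹ • K).det)) := by
  have hσ2 : (0:ℝ) < σ ^ 2 := by positivity
  set α := (σ ^ 2)⁻¹ with hαdef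
  have hα : 0 < α := by positivity
  have hL : 0 < Real.log (1 + α) := Real.log_pos (by linarith)
  have hsum : (∑ i : Fin t,
        (K i i -
          (fun a : Fin i.val => K ⟨a.val, a.isLt.trans i.isLt⟩ i) ⬝ᵥ
            (((Matrix.of fun a b : Fin i.val =>
                  K ⟨a.val, a.isLt.trans i.isLt⟩ ⟨b.val, b.isLt.trans i.isLt⟩) +
                σ ^ 2 • (1 : Matrix (Fin i.val) (Fin i.val) ℝ))⁻¹ *ᵥ
              fun a : Fin i.val => K ⟨a.val, a.isLt.trans i.isLt⟩ i)))
      = ∑ i : Fin t, sval t K σ i.1 i.isLt := rfl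
  rw [hsum]
  have hpos : ∀ i : Fin t, (0:ℝ) < 1 + α * sval t K σ i.1 i.isLt := fun i => by
    have := sval_nonneg hσ hK i.1 i.isLt
    nlinarith
  have hdet : (1 + α • K).det = ∏ i : Fin t, (1 + α * sval t K σ i.1 i.isLt) := by
    have h2 : (1 : Matrix (Fin t) (Fin t) ℝ) + α • K = α • (K + σ ^ 2 • 1) := by
      rw [smul_add, smul_smul, hαdef, inv_mul_cancel₀ hσ2.ne', one_smul, add_comm]
    have h1 : subK t K t le_rfl + σ ^ 2 • 1 = K + σ ^ 2 • (1 : Matrix (Fin t) (Fin t) ℝ) := rfl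
    rw [h2, det_smul, ← h1, det_prod t K σ hσ hK t le_rfl]
    rw [show α ^ Fintype.card (Fin t) = ∏ _i : Fin t, α by
      simp [Finset.prod_const, Finset.card_univ], ← Finset.prod_mul_distrib]
    refine Finset.prod_congr rfl fun i _ => ?_
    have : α * σ ^ 2 = 1 := inv_mul_cancel₀ hσ2.ne'
    push_cast
    nlinarith [this]
  rw [hdet, Real.log_prod fun i _ => (hpos i).ne']
  have hrw : (2 / Real.log (1 + α)) *
      ((1 / 2) * ∑ i : Fin t, Real.log (1 + α * sval t K σ i.1 i.isLt))
      = ∑ i : Fin t, Real.log (1 + α * sval t K σ i.1 i.isLt) / Real.log (1 + α) := by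
    have hL' : Real.log (1 + α) ≠ 0 := hL.ne'
    have key : ∀ X : ℝ, 2 / Real.log (1 + α) * (1 / 2 * X) = X / Real.log (1 + α) :=
      fun X => by field_simp
    rw [key, Finset.sum_div]
  rw [hrw]
  refine Finset.sum_le_sum fun i _ => ?_
  rw [le_div_iff₀ hL]
  exact scalar_ineq α _ hα (sval_nonneg hσ hK i.1 i.isLt)
    (sval_le_one hσ hK hdiag i.1 i.isLt)
end
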